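/- arXiv:1007.1166 — 3 statements merged into one kernel-verified Lean document; each statement's English description precedes it below -/
import Mathlib

section
/- Let a = (5+√57)/2 and b = (5+√57)²/(4·(8+√57)). Then: a ≥ 1, b ≥ 1, b = 3a²/(a²+a+1), a²·b = a·b + 2a² + 2b, a·b² ≥ b² + 2a, and b ≤ 2.533. -/
/-- Let `a = (5+√57)/2` and `b = (5+√57)²/(4·(8+√57))`. Then `a ≥ 1`, `b ≥ 1`,
`b = 3a²/(a²+a+1)`, `a²·b = a·b + 2a² + 2b`, `a·b² ≥ b² + 2a`, and `b ≤ 2.533`. -/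
theorem stmt_11 (a b : ℝ) (ha : a = (5 + Real.sqrt 57) / 2)
    (hb : b = (5 + Real.sqrt 57) ^ 2 / (4 * (8 + Real.sqrt 57))) :
    1 ≤ a ∧ 1 ≤ b ∧
    b = 3 * a ^ 2 / (a ^ 2 + a + 1) ∧
    a ^ 2 * b = a * b + 2 * a ^ 2 + 2 * b ∧
    a * b ^ 2 ≥ b ^ 2 + 2 * a ∧
    b ≤ 2.533 := by
  set s := Real.sqrt 57 with hsdef
  have hs2 : s ^ 2 = 57 := Real.sq_sqrt (by norm_num)
  have hlo : (7.54 : ℝ) ≤ s := by nlinarith [Real.sqrt_nonneg 57, hs2]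
  have hhi : s ≤ 7.55 := by nlinarith [Real.sqrt_nonneg 57, hs2]
  have hd : (0 : ℝ) < 4 * (8 + s) := by linarith
  have hbv : b * (4 * (8 + s)) = (5 + s) ^ 2 := by
    rw [hb, div_mul_cancel₀ _ (ne_of_gt hd)]
  have hbl : (2.5 : ℝ) ≤ b := by nlinarith
  have hbu : b ≤ 2.533 := by nlinarith
  have hal : (6.27 : ℝ) ≤ a := by rw [ha]; linarith
  have hd2 : (0 : ℝ) < a ^ 2 + a + 1 := by nlinarith
  subst ha
  refine ⟨by linarith, by linarith, ?_, ?_, ?_, hbu⟩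
  · rw [eq_div_iff (ne_of_gt hd2)]
    linear_combination (b / 4) * hs2 + (3 / 4) * hbv
  · linear_combination (b / 4) * hs2 + (1 / 2) * hbv
  · nlinarith [mul_le_mul hbl hbl (by norm_num) (by linarith : (0:ℝ) ≤ b)]
end

section
/- For all natural numbers n and r with r ≤ n, there exists a set C ⊆ {0,1}^n such that every β ∈ {0,1}^n is within Hamming distance r of some α ∈ C (i.e., the Hamming balls of radius r around the elements of C cover {0,1}^n), and |C| · ∑_{i=0}^{r} C(n,i) ≤ (n+1) · 2^n. -/
/-!
Greedy covering (Lovász–Stein). Every word lies in `S = ∑_{i ≤ r} C(n,i)` of the `M = 2^n`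
balls, so by double counting some ball contains an `S/M` fraction of any set of uncovered words.
Taking such a ball repeatedly, after `t` rounds at most `2^n (1 - S/M)^t ≤ 2^n e^{-tS/M}` words
remain uncovered, which is `< 1` as soon as `tS > nM`; the least such `t` satisfies `tS ≤ (n+1)M`.
-/

open Finset

theorem card_filter_card_le_eq_sum_choose (ι : Type*) [Fintype ι] [DecidableEq ι] (r : ℕ) :
    #{s : Finset ι | #s ≤ r} = ∑ i ∈ range (r + 1), (Fintype.card ι).choose i := by
  have hunion : ({s : Finset ι | #s ≤ r} : Finset _)
      = (range (r + 1)).biUnion fun i ↦ powersetCard i univ := by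
    ext s; simp
  rw [hunion, card_biUnion ((pairwise_disjoint_powersetCard _).set_pairwise _)]
  simp [card_powersetCard]

theorem card_hammingDist_le_eq_sum_choose {ι : Type*} [Fintype ι] [DecidableEq ι]
    (β : ι → Bool) (r : ℕ) :
    #{α | hammingDist α β ≤ r} = ∑ i ∈ range (r + 1), (Fintype.card ι).choose i := by
  rw [← card_filter_card_le_eq_sum_choose]
  refine card_nbij' (fun α ↦ ({i | α i ≠ β i} : Finset ι))
    (fun s i ↦ xor (decide (i ∈ s)) (β i)) ?_ ?_ ?_ ?_
  · intro α hα; simpa [hammingDist] using hα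
  · intro s hs
    have : ({i | (decide (i ∈ s) ^^ β i) ≠ β i} : Finset ι) = s := by
      ext i; by_cases h : i ∈ s <;> simp [h]
    simpa [hammingDist, this] using hs
  · intro α _; funext i
    simp only [mem_filter, mem_univ, true_and]
    cases α i <;> cases β i <;> rfl
  · intro s _; ext i; by_cases h : i ∈ s <;> simp [h]

namespace Real

theorem mul_one_sub_pow_lt_one {N x k : ℝ} {t : ℕ} (hN : 0 < N) (hNk : N ≤ exp k)
    (hx : x ≤ 1) (hkt : k < t * x) : N * (1 - x) ^ t < 1 :=
  calc N * (1 - x) ^ t ≤ N * exp (-x) ^ t := by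
        gcongr
        exact one_sub_le_exp_neg x
    _ = N * exp (-(t * x)) := by rw [← exp_nat_mul, mul_neg]
    _ < N * exp (-k) := by gcongr
    _ ≤ exp k * exp (-k) := by gcongr
    _ = 1 := by rw [← exp_add, add_neg_cancel, exp_zero]

end Real

namespace SetCover

variable {ι α : Type*} [Fintype ι] (R : ι → α → Prop) [∀ c b, Decidable (R c b)]

theorem exists_mul_card_le_card_mul_card [Nonempty ι] {S : ℕ}
    (hS : ∀ b, S ≤ #{c | R c b}) (V : Finset α) :
    ∃ c, S * #V ≤ Fintype.card ι * #{b ∈ V | R c b} := by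
  have hdouble : ∑ c : ι, #{b ∈ V | R c b} = ∑ b ∈ V, #{c | R c b} :=
    sum_card_bipartiteAbove_eq_sum_card_bipartiteBelow R
  have hsum : ∑ _c : ι, S * #V ≤ ∑ c : ι, Fintype.card ι * #{b ∈ V | R c b} :=
    calc ∑ _c : ι, S * #V = Fintype.card ι * ∑ _b ∈ V, S := by simp [mul_comm]
      _ ≤ Fintype.card ι * ∑ b ∈ V, #{c | R c b} := by gcongr with b; exact hS b
      _ = ∑ c : ι, Fintype.card ι * #{b ∈ V | R c b} := by rw [← hdouble, mul_sum]
  obtain ⟨c, -, hc⟩ := exists_le_of_sum_le univ_nonempty hsum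
  exact ⟨c, hc⟩

theorem exists_card_filter_not_le [Nonempty ι] {S : ℕ}
    (hS : ∀ b, S ≤ #{c | R c b}) (V : Finset α) :
    ∃ c, (#{b ∈ V | ¬R c b} : ℝ) ≤ #V * (1 - S / Fintype.card ι) := by
  obtain ⟨c, hc⟩ := exists_mul_card_le_card_mul_card R hS V
  refine ⟨c, ?_⟩
  have hsplit := card_filter_add_card_filter_not (s := V) (R c)
  have hM : (0 : ℝ) < Fintype.card ι := by exact_mod_cast Fintype.card_pos
  have hcovered : (#V : ℝ) * S / Fintype.card ι ≤ #{b ∈ V | R c b} := by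
    rw [div_le_iff₀ hM, mul_comm _ (Fintype.card ι : ℝ), mul_comm (#V : ℝ)]
    exact_mod_cast hc
  rw [mul_one_sub, ← mul_div_assoc]
  have : (#{b ∈ V | R c b} : ℝ) + #{b ∈ V | ¬R c b} = #V := by exact_mod_cast hsplit
  linarith

theorem exists_card_le_card_filter_forall_not_le [DecidableEq ι] [Nonempty ι] {S : ℕ}
    (hS : ∀ b, S ≤ #{c | R c b}) (hSι : S ≤ Fintype.card ι) (t : ℕ) (V : Finset α) :
    ∃ C : Finset ι, #C ≤ t ∧
      (#{b ∈ V | ∀ c ∈ C, ¬R c b} : ℝ) ≤ #V * (1 - S / Fintype.card ι) ^ t := by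
  induction t generalizing V with
  | zero => exact ⟨∅, by simp, by simp⟩
  | succ t ih =>
    obtain ⟨c, hc⟩ := exists_card_filter_not_le R hS V
    obtain ⟨C, hCt, hC⟩ := ih {b ∈ V | ¬R c b}
    refine ⟨insert c C, (card_insert_le _ _).trans (by omega), ?_⟩
    have hrate : 0 ≤ 1 - (S : ℝ) / Fintype.card ι := by
      rw [sub_nonneg]; exact div_le_one_of_le₀ (by exact_mod_cast hSι) (by positivity)
    calc (#{b ∈ V | ∀ c' ∈ insert c C, ¬R c' b} : ℝ)
        = #{b ∈ {b ∈ V | ¬R c b} | ∀ c' ∈ C, ¬R c' b} := by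
          rw [filter_filter]; simp only [forall_mem_insert]
      _ ≤ _ := hC
      _ ≤ #V * (1 - S / Fintype.card ι) * (1 - S / Fintype.card ι) ^ t := by gcongr
      _ = #V * (1 - S / Fintype.card ι) ^ (t + 1) := by ring

theorem exists_cover_card_mul_le [Fintype α] [Nonempty α] [DecidableEq ι] {k S : ℕ}
    (hα : (Fintype.card α : ℝ) ≤ Real.exp k) (hS₀ : 0 < S)
    (hS : ∀ b, S ≤ #{c | R c b}) :
    ∃ C : Finset ι, (∀ b, ∃ c ∈ C, R c b) ∧ #C * S ≤ (k + 1) * Fintype.card ι := by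
  obtain ⟨b₀⟩ := ‹Nonempty α›
  have hSι : S ≤ Fintype.card ι := (hS b₀).trans (card_le_univ _)
  have : Nonempty ι := Fintype.card_pos_iff.mp (hS₀.trans_le hSι)
  set M := Fintype.card ι
  -- `t` is the least number of greedy rounds with `t * S > k * M`
  set t := k * M / S + 1
  have hlow : k * M < t * S := by simpa [t, add_mul] using Nat.lt_div_mul_add (a := k * M) hS₀
  have hhigh : t * S ≤ (k + 1) * M := by
    simp only [t, add_mul, one_mul]; exact add_le_add (Nat.div_mul_le_self _ _) hSι
  obtain ⟨C, hCt, hC⟩ := exists_card_le_card_filter_forall_not_le R hS hSι t univ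
  have hM : (0 : ℝ) < M := by exact_mod_cast Fintype.card_pos
  have hlt : (#{b ∈ (univ : Finset α) | ∀ c ∈ C, ¬R c b} : ℝ) < 1 := by
    refine hC.trans_lt <|
      Real.mul_one_sub_pow_lt_one (k := k) (by simpa using Fintype.card_pos) ?_ ?_ ?_
    · simpa using hα
    · exact div_le_one_of_le₀ (by exact_mod_cast hSι) hM.le
    · rw [mul_div_assoc', lt_div_iff₀ hM]; exact_mod_cast hlow
  refine ⟨C, fun b ↦ ?_, (Nat.mul_le_mul_right S hCt).trans hhigh⟩
  have hempty : ({b ∈ (univ : Finset α) | ∀ c ∈ C, ¬R c b} : Finset α) = ∅ := by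
    rw [← card_eq_zero]; exact_mod_cast Nat.lt_one_iff.mp (by exact_mod_cast hlt)
  simpa using filter_eq_empty_iff.mp hempty (mem_univ b)

end SetCover

theorem stmt_14_general (n r : ℕ) :
    ∃ C : Finset (Fin n → Bool),
      (∀ β : Fin n → Bool, ∃ α ∈ C, hammingDist α β ≤ r) ∧
      C.card * ∑ i ∈ Finset.range (r + 1), n.choose i ≤ (n + 1) * 2 ^ n := by
  have hball (β : Fin n → Bool) :
      ∑ i ∈ range (r + 1), n.choose i ≤ #{α | hammingDist α β ≤ r} := by
    rw [card_hammingDist_le_eq_sum_choose, Fintype.card_fin]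
  have hcard : (Fintype.card (Fin n → Bool) : ℝ) ≤ Real.exp n := by
    rw [Fintype.card_fun, Fintype.card_bool, Fintype.card_fin, ← Real.exp_one_pow]
    push_cast
    gcongr
    linarith [Real.add_one_le_exp 1]
  have hpos : 0 < ∑ i ∈ range (r + 1), n.choose i := by simp [sum_range_succ']
  simpa using
    SetCover.exists_cover_card_mul_le (fun α β ↦ hammingDist α β ≤ r) hcard hpos hball

/-- For all `n` and `r ≤ n`, there exists a covering code `C ⊆ {0,1}^n` of radius `r`
(every `β ∈ {0,1}^n` is within Hamming distance `r` of some `α ∈ C`) with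
`|C| · ∑_{i=0}^{r} C(n,i) ≤ (n+1) · 2^n`. -/
theorem stmt_14 (n r : ℕ) (hr : r ≤ n) :
    ∃ C : Finset (Fin n → Bool),
      (∀ β : Fin n → Bool, ∃ α ∈ C, hammingDist α β ≤ r) ∧
      C.card * ∑ i ∈ Finset.range (r + 1), n.choose i ≤ (n + 1) * 2 ^ n :=
  stmt_14_general n r
end

section
/- Define the directed distance δ on ℤ/3ℤ by δ(u,v) = the least natural number k ∈ {0,1,2} with v = u + k, and for α, β ∈ (ℤ/3ℤ)^m define d(α,β) = ∑_{i=1}^{m} δ(α_i, β_i). There exists a constant c such that for every natural number m ≥ 1 and every real x > 0, there exist a natural number s with 0 ≤ s ≤ 2m and a set C ⊆ (ℤ/3ℤ)^m such that: for every β ∈ (ℤ/3ℤ)^m there is some α ∈ C with d(α,β) ≤ s, and |C| ≤ (m+1)^c · 3^m · x^s / (1+x+x²)^m. -/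
/-- The directed cyclic distance on `ℤ/3ℤ`: the least natural number `k`
(necessarily in `{0,1,2}`) with `v = u + k`. -/
noncomputable def cyclicDelta (u v : ZMod 3) : ℕ :=
  sInf {k : ℕ | v = u + (k : ZMod 3)}

/-- The total directed distance on `(ℤ/3ℤ)^m`:
`d(α,β) = ∑_{i=1}^{m} δ(α_i, β_i)`. -/
noncomputable def cyclicDist {m : ℕ} (α β : Fin m → ZMod 3) : ℕ :=
  ∑ i, cyclicDelta (α i) (β i)

/-!
Weight each `β` by `x ^ d(0, β)`: the total weight is `(1 + x + x²)^m`, and `d(0, β)` takes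
only the `2m + 1` values `0, …, 2m`, so for some radius `s` the ball `B` of radius `s` satisfies
`(1 + x + x²)^m ≤ (2m + 1) · |B| · x^s`. Since `d(α, β) = d(0, β - α)`, covering with radius
`s` means covering the group by translates of `B`, and a first-moment count shows that
`(3^m / |B|) · log 3^m + 1 ≤ (2m + 1) · 3^m / |B|` translates suffice.
-/

open Finset Real

theorem mul_sub_pow_lt_pow_of_mul_log_lt {n V k : ℕ} (hVn : V ≤ n) (h : n * log n < k * V) :
    n * (n - V) ^ k < n ^ k := by
  have hn : (0 : ℝ) < n := by
    rcases Nat.eq_zero_or_pos n with rfl | hn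
    · simp [Nat.le_zero.1 hVn] at h
    · exact_mod_cast hn
  have hlog : log n < k * (V / n) := by
    rw [mul_div_assoc', lt_div_iff₀ hn]; linarith
  have hbase : (n - V : ℝ) = n * (1 - V / n) := by field_simp
  have hdecay : (1 - V / n : ℝ) ^ k ≤ exp (-(k * (V / n))) := by
    rw [neg_mul_eq_mul_neg, exp_nat_mul]
    exact pow_le_pow_left₀ (by rw [sub_nonneg, div_le_one hn]; exact_mod_cast hVn)
      (by linarith [add_one_le_exp (-(V / n : ℝ))]) k
  have hsmall : (n : ℝ) * exp (-(k * (V / n))) < 1 := by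
    rw [exp_neg, ← div_eq_mul_inv, div_lt_one (exp_pos _)]
    exact (log_lt_iff_lt_exp hn).1 hlog
  rw [← Nat.cast_lt (α := ℝ)]
  push_cast [Nat.cast_sub hVn]
  calc (n : ℝ) * (n - V) ^ k = n ^ k * (n * (1 - V / n) ^ k) := by rw [hbase, mul_pow]; ring
    _ ≤ n ^ k * (n * exp (-(k * (V / n)))) := by gcongr
    _ < n ^ k * 1 := by gcongr
    _ = n ^ k := mul_one _

theorem card_filter_sub_mem {G : Type*} [AddGroup G] [Fintype G] [DecidableEq G]
    (A : Finset G) (g : G) : #(univ.filter fun c => g - c ∈ A) = #A :=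
  card_bij' (fun c _ => g - c) (fun a _ => -a + g) (fun c hc => (mem_filter.1 hc).2)
    (fun a ha => by simpa using ha) (fun c _ => by simp [sub_eq_add_neg])
    (fun a _ => by simp [sub_eq_add_neg, ← add_assoc])

/-- Each `g` is missed by `(|G| - #A)^k` of the `|G|^k` tuples `t : Fin k → G` (missed meaning
`g - t i ∉ A` for all `i`), so under the hypothesis some tuple misses no `g`. -/
theorem exists_covering_of_card_mul_pow_lt {G : Type*} [AddGroup G] [Fintype G]
    [DecidableEq G] (A : Finset G) (k : ℕ)
    (h : Fintype.card G * (Fintype.card G - #A) ^ k < Fintype.card G ^ k) :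
    ∃ C : Finset G, #C ≤ k ∧ ∀ g, ∃ c ∈ C, g - c ∈ A := by
  set missing : G → Finset (Fin k → G) :=
    fun g => Fintype.piFinset fun _ => univ.filter fun c => g - c ∉ A
  have hmissing : ∀ g, #(missing g) = (Fintype.card G - #A) ^ k := fun g => by
    rw [Fintype.card_piFinset, prod_const, card_univ, Fintype.card_fin, filter_not,
      card_sdiff_of_subset (filter_subset _ _), card_filter_sub_mem, card_univ]
  obtain ⟨t, ht⟩ : ∃ t : Fin k → G, ∀ g, t ∉ missing g := by
    by_contra! hall
    have : Fintype.card G ^ k ≤ Fintype.card G * (Fintype.card G - #A) ^ k :=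
      calc Fintype.card G ^ k = #(univ : Finset (Fin k → G)) := by simp
        _ ≤ #(univ.biUnion missing) := card_le_card fun t _ => by
          obtain ⟨g, hg⟩ := hall t; exact mem_biUnion.2 ⟨g, mem_univ g, hg⟩
        _ ≤ ∑ g, #(missing g) := card_biUnion_le
        _ = Fintype.card G * (Fintype.card G - #A) ^ k := by simp [hmissing]
    omega
  refine ⟨univ.image t, card_image_le.trans (by simp), fun g => ?_⟩
  obtain ⟨i, hi⟩ : ∃ i, g - t i ∈ A := by simpa [missing] using ht g
  exact ⟨t i, mem_image_of_mem t (mem_univ i), hi⟩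

theorem exists_covering_card_le {G : Type*} [AddGroup G] [Fintype G] [DecidableEq G]
    (A : Finset G) (hA : A.Nonempty) :
    ∃ C : Finset G, (∀ g, ∃ c ∈ C, g - c ∈ A) ∧
      (#C : ℝ) ≤ Fintype.card G * log (Fintype.card G) / #A + 1 := by
  set k := ⌊Fintype.card G * log (Fintype.card G) / #A⌋₊ + 1
  have hA' : (0 : ℝ) < #A := by exact_mod_cast hA.card_pos
  have hk : Fintype.card G * log (Fintype.card G) < k * #A := by
    rw [← div_lt_iff₀ hA']; push_cast [k]; exact Nat.lt_floor_add_one _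
  obtain ⟨C, hCk, hC⟩ := exists_covering_of_card_mul_pow_lt A k
    (mul_sub_pow_lt_pow_of_mul_log_lt (card_le_univ A) hk)
  refine ⟨C, hC, ?_⟩
  calc (#C : ℝ) ≤ k := by exact_mod_cast hCk
    _ ≤ _ := by
      push_cast [k]
      gcongr
      exact Nat.floor_le (by positivity)

theorem cyclicDelta_eq_val_sub (u v : ZMod 3) : cyclicDelta u v = (v - u).val := by
  have hmem : (v - u).val ∈ {k : ℕ | v = u + (k : ZMod 3)} := by
    simp [ZMod.natCast_val, ZMod.cast_id]
  refine le_antisymm (Nat.sInf_le hmem) (le_csInf ⟨_, hmem⟩ fun k (hk : v = u + k) => ?_)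
  calc (v - u).val = (k : ZMod 3).val := by rw [hk, add_sub_cancel_left]
    _ = k % 3 := ZMod.val_natCast 3 k
    _ ≤ k := Nat.mod_le k 3

theorem cyclicDist_eq_cyclicDist_zero_sub {m : ℕ} (α β : Fin m → ZMod 3) :
    cyclicDist α β = cyclicDist 0 (β - α) := by
  simp [cyclicDist, cyclicDelta_eq_val_sub]

theorem cyclicDist_le {m : ℕ} (α β : Fin m → ZMod 3) : cyclicDist α β ≤ 2 * m := by
  calc cyclicDist α β ≤ ∑ _i : Fin m, 2 := sum_le_sum fun i _ => by
        rw [cyclicDelta_eq_val_sub]; have := ZMod.val_lt (β i - α i); omega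
    _ = 2 * m := by simp [mul_comm]

theorem sum_pow_cyclicDist_zero {R : Type*} [CommSemiring R] (m : ℕ) (x : R) :
    ∑ β : Fin m → ZMod 3, x ^ cyclicDist 0 β = (1 + x + x ^ 2) ^ m := by
  have hcoord : ∑ v : ZMod 3, x ^ v.val = 1 + x + x ^ 2 := by
    change ∑ v : Fin 3, x ^ v.val = _
    simp [Fin.sum_univ_three]
  simp_rw [cyclicDist, cyclicDelta_eq_val_sub, Pi.zero_apply, sub_zero, ← prod_pow_eq_pow_sum]
  rw [← Fintype.prod_sum (fun (_ : Fin m) (v : ZMod 3) => x ^ v.val), prod_const, card_univ,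
    Fintype.card_fin, hcoord]

noncomputable def cyclicBall (m s : ℕ) : Finset (Fin m → ZMod 3) :=
  univ.filter fun β => cyclicDist 0 β ≤ s

theorem mem_cyclicBall {m s : ℕ} {β : Fin m → ZMod 3} :
    β ∈ cyclicBall m s ↔ cyclicDist 0 β ≤ s := by
  simp [cyclicBall]

theorem zero_mem_cyclicBall (m s : ℕ) : (0 : Fin m → ZMod 3) ∈ cyclicBall m s := by
  simp [mem_cyclicBall, cyclicDist, cyclicDelta_eq_val_sub]

/-- Pigeonhole over the `2m + 1` possible distances in `∑_β x^{d(0,β)} = (1 + x + x²)^m`. -/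
theorem exists_pow_le_card_cyclicBall_mul (m : ℕ) {x : ℝ} (hx : 0 ≤ x) :
    ∃ s ≤ 2 * m, (1 + x + x ^ 2) ^ m ≤ (2 * m + 1) * #(cyclicBall m s) * x ^ s := by
  set sphere : ℕ → ℝ := fun s =>
    ∑ β ∈ univ.filter (fun β : Fin m → ZMod 3 => cyclicDist 0 β = s), x ^ cyclicDist 0 β
  have htotal : ∑ s ∈ range (2 * m + 1), sphere s = (1 + x + x ^ 2) ^ m := by
    rw [sum_fiberwise_of_maps_to fun β _ => mem_range.2 (Nat.lt_succ_of_le (cyclicDist_le 0 β)),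
      sum_pow_cyclicDist_zero]
  obtain ⟨s, hs, hmax⟩ := exists_max_image (range (2 * m + 1)) sphere nonempty_range_add_one
  have hsphere : sphere s ≤ #(cyclicBall m s) * x ^ s := by
    calc sphere s
        = ∑ β ∈ univ.filter (fun β : Fin m → ZMod 3 => cyclicDist 0 β = s), x ^ s :=
          sum_congr rfl fun β hβ => by rw [(mem_filter.1 hβ).2]
      _ ≤ ∑ β ∈ cyclicBall m s, x ^ s :=
          sum_le_sum_of_subset_of_nonneg (monotone_filter_right _ fun _ _ h => h.le)
            fun _ _ _ => pow_nonneg hx s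
      _ = #(cyclicBall m s) * x ^ s := by rw [sum_const, nsmul_eq_mul]
  refine ⟨s, Nat.lt_succ_iff.1 (mem_range.1 hs), ?_⟩
  calc (1 + x + x ^ 2) ^ m ≤ #(range (2 * m + 1)) • sphere s :=
        htotal ▸ sum_le_card_nsmul _ _ _ hmax
    _ ≤ (2 * m + 1) * #(cyclicBall m s) * x ^ s := by
      rw [card_range, nsmul_eq_mul, mul_assoc]; push_cast; gcongr

theorem exists_cyclicDist_covering (m s : ℕ) :
    ∃ C : Finset (Fin m → ZMod 3), (∀ β, ∃ α ∈ C, cyclicDist α β ≤ s) ∧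
      (#C : ℝ) ≤ (2 * m + 1) * 3 ^ m / #(cyclicBall m s) := by
  obtain ⟨C, hC, hcard⟩ :=
    exists_covering_card_le (cyclicBall m s) ⟨0, zero_mem_cyclicBall m s⟩
  refine ⟨C, fun β => ?_, hcard.trans ?_⟩
  · obtain ⟨α, hα, hβα⟩ := hC β
    exact ⟨α, hα, cyclicDist_eq_cyclicDist_zero_sub α β ▸ mem_cyclicBall.1 hβα⟩
  have hV : (0 : ℝ) < #(cyclicBall m s) := mod_cast card_pos.2 ⟨0, zero_mem_cyclicBall m s⟩
  have hVle : (#(cyclicBall m s) : ℝ) ≤ 3 ^ m := by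
    exact_mod_cast (card_le_univ _).trans_eq (by simp)
  have hlog : (m : ℝ) * log 3 ≤ 2 * m := by
    rw [mul_comm]
    gcongr
    linarith [log_le_sub_one_of_pos (by norm_num : (0 : ℝ) < 3)]
  rw [Fintype.card_pi, prod_const, card_univ, Fintype.card_fin, ZMod.card, Nat.cast_pow,
    Real.log_pow, div_add_one hV.ne', div_le_div_iff_of_pos_right hV]
  push_cast
  nlinarith [mul_le_mul_of_nonneg_left hlog (pow_nonneg (by norm_num : (0 : ℝ) ≤ 3) m)]

/-- There is a constant `c` such that for every `m ≥ 1` and every real `x > 0`,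
there exist `s ≤ 2m` and a covering code `C ⊆ (ℤ/3ℤ)^m` of radius `s` with respect
to the directed distance `d`, with `|C| ≤ (m+1)^c · 3^m · x^s / (1+x+x²)^m`. -/
theorem stmt_15 :
    ∃ c : ℕ, ∀ m : ℕ, 1 ≤ m → ∀ x : ℝ, 0 < x →
      ∃ s : ℕ, s ≤ 2 * m ∧
        ∃ C : Finset (Fin m → ZMod 3),
          (∀ β : Fin m → ZMod 3, ∃ α ∈ C, cyclicDist α β ≤ s) ∧
          (C.card : ℝ) ≤ (m + 1) ^ c * 3 ^ m * x ^ s / (1 + x + x ^ 2) ^ m := by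
  refine ⟨4, fun m _ x hx => ?_⟩
  obtain ⟨s, hs, hball⟩ := exists_pow_le_card_cyclicBall_mul m hx.le
  obtain ⟨C, hC, hcard⟩ := exists_cyclicDist_covering m s
  refine ⟨s, hs, C, hC, hcard.trans ?_⟩
  have hV : (0 : ℝ) < #(cyclicBall m s) := mod_cast card_pos.2 ⟨0, zero_mem_cyclicBall m s⟩
  have hpoly : ((2 * m + 1) ^ 2 : ℝ) ≤ (m + 1) ^ 4 := by
    rw [show ((m + 1) ^ 4 : ℝ) = ((m + 1) ^ 2) ^ 2 by ring]
    gcongr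
    nlinarith
  rw [div_le_div_iff₀ hV (by positivity)]
  calc (2 * m + 1) * 3 ^ m * (1 + x + x ^ 2) ^ m
      ≤ (2 * m + 1) * 3 ^ m * ((2 * m + 1) * #(cyclicBall m s) * x ^ s) := by gcongr
    _ = (2 * m + 1) ^ 2 * 3 ^ m * x ^ s * #(cyclicBall m s) := by ring
    _ ≤ (m + 1) ^ 4 * 3 ^ m * x ^ s * #(cyclicBall m s) := by gcongr
end
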